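/- arXiv:2501.12504 — 3 statements merged into one kernel-verified Lean document; each statement's English description precedes it below -/
import Mathlib

section
/- For a prime p ≥ 5 with r = (p−1)/2, the Gram matrix G of the trace form of Z[ζ_p + ζ_p⁻¹] with respect to the Z-basis {1, η₁, …, η_{r−1}} (where η_k = ζ_p^k + ζ_p^{−k}) satisfies: G₀₀ = (p−1)/2, G₀ⱼ = Gⱼ₀ = −1 for 1 ≤ j ≤ r−1, Gⱼⱼ = p−2 for 1 ≤ j ≤ r−1, and Gᵢⱼ = −2 for distinct i, j with 1 ≤ i, j ≤ r−1. -/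
lemma key_sum (p r : ℕ) (hpr : p = 2*r+1) (hr1 : 1 ≤ r) {ω : ℂ}
    (hω : IsPrimitiveRoot ω p) :
    ∑ m ∈ Finset.Icc 1 r, (ω^m + ω⁻¹^m) = -1 := by
  have hne : ω ≠ 0 := hω.ne_zero (by omega)
  have h0 : ∑ m ∈ Finset.range p, ω^m = 0 := hω.geom_sum_eq_zero (by omega)
  have hrange : Finset.range p = insert 0 (Finset.Ioc 0 (2*r)) := by
    ext x; simp [Finset.mem_Ioc]; omega
  have h1 : (1 : ℂ) + ∑ m ∈ Finset.Ioc 0 (2*r), ω^m = 0 := by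
    rw [hrange, Finset.sum_insert (by simp)] at h0
    simpa using h0
  have hIcc : Finset.Icc 1 r = Finset.Ioc 0 r := by ext x; simp; omega
  have hrw : ∀ m ∈ Finset.Ioc 0 r, ω⁻¹^m = ω^(p - m) := by
    intro m hm
    simp only [Finset.mem_Ioc] at hm
    have : ω^(p-m) * ω^m = 1 := by
      rw [← pow_add, Nat.sub_add_cancel (by omega), hω.pow_eq_one]
    rw [inv_pow]
    field_simp
    linear_combination -this
  have hre : ∑ m ∈ Finset.Ioc 0 r, ω⁻¹^m = ∑ m ∈ Finset.Ioc r (2*r), ω^m := by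
    rw [Finset.sum_congr rfl hrw]
    refine Finset.sum_nbij' (fun m => p - m) (fun m => p - m) ?_ ?_ ?_ ?_ ?_ <;>
      intro a ha <;> simp only [Finset.mem_Ioc] at * <;> try omega
  rw [hIcc, Finset.sum_add_distrib, hre,
    Finset.sum_Ioc_consecutive _ (Nat.zero_le r) (by omega)]
  linear_combination h1

lemma prod_expand {ζ : ℂ} (hz : ζ ≠ 0) (m a c : ℕ) (hca : c ≤ a) :
    (ζ^(m*a) + ζ⁻¹^(m*a)) * (ζ^(m*c) + ζ⁻¹^(m*c)) =
      ((ζ^(a+c))^m + ((ζ^(a+c))⁻¹)^m) + ((ζ^(a-c))^m + ((ζ^(a-c))⁻¹)^m) := by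
  obtain ⟨k, rfl⟩ : ∃ k, a = c + k := ⟨a - c, by omega⟩
  have hk : c + k - c = k := by omega
  have h : ζ^(m*c) * ζ⁻¹^(m*c) = 1 := by
    rw [← mul_pow, mul_inv_cancel₀ hz, one_pow]
  rw [hk]
  simp only [inv_pow, ← pow_mul]

  field_simp
  ring

/-- For a prime `p ≥ 5` and `r = (p−1)/2`, the Gram matrix of the trace form of
`ℤ[ζ_p + ζ_p⁻¹]` in the basis `{1, η₁, …, η_{r−1}}` (where `η_k = ζ^k + ζ^{−k}`,
and the trace is the sum over the `r` real embeddings, the `m`-th of which sends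
`η_k` to `ζ^{mk} + ζ^{−mk}`) has entries `r` at `(0,0)`, `−1` in the remaining
first row/column, `p−2` on the remaining diagonal, and `−2` elsewhere. -/
theorem stmt7 (p r : ℕ) (hp : p.Prime) (hp5 : 5 ≤ p) (hr : r = (p - 1) / 2)
    (ζ : ℂ) (hζ : IsPrimitiveRoot ζ p)
    (b : Fin r → ℕ → ℂ)
    (hb : ∀ (i : Fin r) (m : ℕ),
      b i m = if (i : ℕ) = 0 then 1 else ζ ^ (m * (i : ℕ)) + ζ⁻¹ ^ (m * (i : ℕ))) :
    ∀ i j : Fin r,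
      (∑ m ∈ Finset.Icc 1 r, b i m * b j m) =
        if (i : ℕ) = 0 ∧ (j : ℕ) = 0 then (r : ℂ)
        else if (i : ℕ) = 0 ∨ (j : ℕ) = 0 then -1
        else if i = j then (p : ℂ) - 2
        else -2 := by
  have hodd : Odd p := hp.odd_of_ne_two (by omega)
  obtain ⟨t, ht⟩ := hodd
  have hpr : p = 2 * r + 1 := by omega
  have hr2 : 2 ≤ r := by omega
  have hz : ζ ≠ 0 := hζ.ne_zero (by omega)
  have S : ∀ k : ℕ, 0 < k → k < p →
      ∑ m ∈ Finset.Icc 1 r, ((ζ^k)^m + ((ζ^k)⁻¹)^m) = -1 := by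
    intro k h1 h2
    refine key_sum p r hpr (by omega) (hζ.pow_of_coprime k ?_)
    exact Nat.coprime_comm.mp (hp.coprime_iff_not_dvd.mpr
      (fun hd => by have := Nat.le_of_dvd h1 hd; omega))
  -- sum for two nonzero indices c ≤ a
  have main : ∀ a c : ℕ, 1 ≤ c → c ≤ a → a ≤ r - 1 →
      ∑ m ∈ Finset.Icc 1 r,
        (ζ^(m*a) + ζ⁻¹^(m*a)) * (ζ^(m*c) + ζ⁻¹^(m*c)) =
        if a = c then (p : ℂ) - 2 else -2 := by
    intro a c h1 h2 h3
    rw [Finset.sum_congr rfl (fun m _ => prod_expand hz m a c h2),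
      Finset.sum_add_distrib]
    have hS1 : ∑ m ∈ Finset.Icc 1 r, ((ζ^(a+c))^m + ((ζ^(a+c))⁻¹)^m) = -1 :=
      S (a+c) (by omega) (by omega)
    by_cases hac : a = c
    · subst hac
      simp only [Nat.sub_self, pow_zero, if_pos rfl, one_pow, inv_one]
      rw [hS1, Finset.sum_const, Nat.card_Icc]
      have h4 : r + 1 - 1 = r := by omega
      rw [h4, if_pos trivial, nsmul_eq_mul]
      push_cast [hpr]
      ring
    · rw [hS1, S (a - c) (by omega) (by omega), if_neg hac]
      ring
  intro i j
  have hi' := i.isLt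
  have hj' := j.isLt
  by_cases hi : (i : ℕ) = 0 <;> by_cases hj : (j : ℕ) = 0
  · simp only [hb, hi, hj, if_pos rfl, one_mul, Finset.sum_const, nsmul_eq_mul,
      mul_one, Nat.card_Icc]
    simp [hi, hj]
  · have : ∑ m ∈ Finset.Icc 1 r, b i m * b j m =
        ∑ m ∈ Finset.Icc 1 r, ((ζ^(j:ℕ))^m + ((ζ^(j:ℕ))⁻¹)^m) := by
      refine Finset.sum_congr rfl fun m _ => ?_
      rw [hb, hb]
      simp [hi, hj, inv_pow, pow_mul']
    rw [this, S (j:ℕ) (by omega) (by omega)]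
    simp [hi, hj]
  · have : ∑ m ∈ Finset.Icc 1 r, b i m * b j m =
        ∑ m ∈ Finset.Icc 1 r, ((ζ^(i:ℕ))^m + ((ζ^(i:ℕ))⁻¹)^m) := by
      refine Finset.sum_congr rfl fun m _ => ?_
      rw [hb, hb]
      simp [hi, hj, inv_pow, pow_mul']
    rw [this, S (i:ℕ) (by omega) (by omega)]
    simp [hi, hj]
  · have hij : (i = j) ↔ ((i:ℕ) = (j:ℕ)) := Fin.ext_iff
    rcases le_total (j : ℕ) (i : ℕ) with h | h
    · have : ∑ m ∈ Finset.Icc 1 r, b i m * b j m =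
          ∑ m ∈ Finset.Icc 1 r,
            (ζ^(m*(i:ℕ)) + ζ⁻¹^(m*(i:ℕ))) * (ζ^(m*(j:ℕ)) + ζ⁻¹^(m*(j:ℕ))) := by
        refine Finset.sum_congr rfl fun m _ => ?_
        rw [hb, hb]; simp [hi, hj]
      rw [this, main (i:ℕ) (j:ℕ) (by omega) h (by omega)]
      by_cases he : i = j
      · rw [if_pos (hij.mp he), if_neg (by tauto), if_neg (by tauto), if_pos he]
      · rw [if_neg (fun hc => he (Fin.ext hc)), if_neg (by tauto),
          if_neg (by tauto), if_neg he]
    · have : ∑ m ∈ Finset.Icc 1 r, b i m * b j m =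
          ∑ m ∈ Finset.Icc 1 r,
            (ζ^(m*(j:ℕ)) + ζ⁻¹^(m*(j:ℕ))) * (ζ^(m*(i:ℕ)) + ζ⁻¹^(m*(i:ℕ))) := by
        refine Finset.sum_congr rfl fun m _ => ?_
        rw [hb, hb]; simp [hi, hj]; ring
      rw [this, main (j:ℕ) (i:ℕ) (by omega) h (by omega)]
      by_cases he : i = j
      · rw [if_pos (hij.mp he).symm, if_neg (by tauto), if_neg (by tauto), if_pos he]
      · rw [if_neg (fun hc => he (Fin.ext hc.symm)), if_neg (by tauto),
          if_neg (by tauto), if_neg he]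
end

section
/- Let η₁, η₂ be the roots of x² + x − 1 with η₁ ≠ η₂, P = [[1,1],[η₁,η₂]], G_unit = [[6,−3],[−3,14]]. For positive reals a, b, let M = P·diag(a,b)·P⁻¹ and G' = M·G_unit·Mᵀ. Then the upper half plane point (x, y) with x = G'₀₁/G'₀₀ and y = √(G'₁₁/G'₀₀ − x²) satisfies (x + 1/2)² + (y − 1/(2√3))² = (2/√3)². -/
/-!
The torus `M = P·diag(a,b)·P⁻¹` has eigenvectors `(1, ηᵢ)`, which are exactly the isotropic lines
of the indefinite form `Q(u, v) = -u² + uv + v²` (`goldenForm`); hence `Mᵀ Q M = (det M) Q` with `det M = ab`.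
So the linear functional `tr(Q G) = G₀₁ + G₁₁ - G₀₀` scales by `ab` while `det G` scales by
`(ab)²`, and `tr(Q G)² / det G = 25 / 75` is the same along the whole orbit. In upper half plane
coordinates `y = √(det G) / G₀₀` and `x² + y² = G₁₁ / G₀₀`, so `tr(Q G) = √(det G / 3)` is
precisely the equation `x² + y² + x - y / √3 = 1` of the circle.
-/

open Matrix

lemma diagonal_mul_mul_diagonal_of_diag_eq_zero {R : Type*} [CommRing R] (a b : R)
    {N : Matrix (Fin 2) (Fin 2) R} (h₀ : N 0 0 = 0) (h₁ : N 1 1 = 0) :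
    diagonal ![a, b] * N * diagonal ![a, b] = (a * b) • N := by
  ext i j
  fin_cases i <;> fin_cases j <;> simp [h₀, h₁] <;> ring

lemma transpose_mul_mul_eq_smul_of_isotropic_columns {R : Type*} [CommRing R]
    {P : Matrix (Fin 2) (Fin 2) R} (hP : IsUnit P.det) {K : Matrix (Fin 2) (Fin 2) R}
    (h₀ : (Pᵀ * K * P) 0 0 = 0) (h₁ : (Pᵀ * K * P) 1 1 = 0) (a b : R) :
    (P * diagonal ![a, b] * P⁻¹)ᵀ * K * (P * diagonal ![a, b] * P⁻¹) = (a * b) • K := by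
  have hPP : P⁻¹ᵀ * Pᵀ = 1 := by rw [← transpose_mul, mul_nonsing_inv P hP, transpose_one]
  calc (P * diagonal ![a, b] * P⁻¹)ᵀ * K * (P * diagonal ![a, b] * P⁻¹)
      = P⁻¹ᵀ * (diagonal ![a, b] * (Pᵀ * K * P) * diagonal ![a, b]) * P⁻¹ := by
        simp only [transpose_mul, diagonal_transpose, Matrix.mul_assoc]
    _ = (a * b) • (P⁻¹ᵀ * Pᵀ * K * (P * P⁻¹)) := by
        rw [diagonal_mul_mul_diagonal_of_diag_eq_zero a b h₀ h₁]
        simp only [Matrix.mul_smul, Matrix.smul_mul, Matrix.mul_assoc]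
    _ = (a * b) • K := by rw [hPP, mul_nonsing_inv P hP, Matrix.one_mul, Matrix.mul_one]

lemma trace_mul_conj_eq_mul_trace {n R : Type*} [Fintype n] [CommRing R]
    {M K : Matrix n n R} {c : R} (h : Mᵀ * K * M = c • K) (G : Matrix n n R) :
    trace (K * (M * G * Mᵀ)) = c * trace (K * G) :=
  calc trace (K * (M * G * Mᵀ)) = trace ((Mᵀ * K * M) * G) := by
        simp only [← Matrix.mul_assoc]
        rw [trace_mul_comm]
        simp only [Matrix.mul_assoc]
    _ = c * trace (K * G) := by rw [h, Matrix.smul_mul, trace_smul, smul_eq_mul]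

lemma Matrix.PosDef.mul_mul_transpose_of_isUnit_det {n : Type*} [Fintype n] [DecidableEq n]
    {G M : Matrix n n ℝ} (hG : G.PosDef) (hM : IsUnit M.det) : (M * G * Mᵀ).PosDef := by
  simpa [star_eq_conjTranspose, conjTranspose_eq_transpose_of_trivial] using
    (IsUnit.posDef_star_right_conjugate_iff ((isUnit_iff_isUnit_det M).2 hM)).2 hG

lemma circle_of_det_eq {g₀₀ g₀₁ g₁₁ : ℝ} (h₀₀ : 0 < g₀₀) (hL : 0 ≤ g₀₁ + g₁₁ - g₀₀)
    (hdet : g₀₀ * g₁₁ - g₀₁ ^ 2 = 3 * (g₀₁ + g₁₁ - g₀₀) ^ 2) :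
    (g₀₁ / g₀₀ + 1 / 2) ^ 2 + (√(g₁₁ / g₀₀ - (g₀₁ / g₀₀) ^ 2) - 1 / (2 * √3)) ^ 2
      = (2 / √3) ^ 2 := by
  set L := g₀₁ + g₁₁ - g₀₀
  have s3 : √3 ^ 2 = 3 := Real.sq_sqrt (by norm_num)
  have hy : √(g₁₁ / g₀₀ - (g₀₁ / g₀₀) ^ 2) = √3 * L / g₀₀ := by
    rw [← Real.sqrt_sq (by positivity : 0 ≤ √3 * L / g₀₀)]
    congr 1
    field_simp
    linear_combination hdet - L ^ 2 * s3
  have hy' : √3 * L / g₀₀ - 1 / (2 * √3) = √3 * (L / g₀₀ - 1 / 6) := by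
    field_simp
    linear_combination 2 * g₀₀ * s3
  rw [hy, hy', mul_pow, div_pow, s3]
  field_simp
  linear_combination -432 * hdet

/-- The form `-u² + uv + v²`, whose isotropic lines are spanned by `(1, η)` with `η² + η = 1`. -/
noncomputable def goldenForm : Matrix (Fin 2) (Fin 2) ℝ := !![-1, 1 / 2; 1 / 2, 1]

lemma goldenForm_isotropic {η₁ η₂ : ℝ} (h₁ : η₁ ^ 2 + η₁ - 1 = 0) (h₂ : η₂ ^ 2 + η₂ - 1 = 0) :
    (!![1, 1; η₁, η₂]ᵀ * goldenForm * !![1, 1; η₁, η₂]) 0 0 = 0 ∧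
      (!![1, 1; η₁, η₂]ᵀ * goldenForm * !![1, 1; η₁, η₂]) 1 1 = 0 := by
  constructor <;>
    simp only [goldenForm, Matrix.mul_apply, Fin.sum_univ_two, transpose_apply, of_apply, cons_val',
      cons_val_zero, cons_val_one, cons_val_fin_one, one_div, one_mul, mul_one]
  · linear_combination h₁
  · linear_combination h₂

lemma trace_goldenForm_mul {G : Matrix (Fin 2) (Fin 2) ℝ} (hG : G.IsSymm) :
    trace (goldenForm * G) = G 0 1 + G 1 1 - G 0 0 := by
  have h₁₀ : G 1 0 = G 0 1 := hG.apply 0 1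
  simp only [goldenForm, trace_fin_two, Matrix.mul_apply, Fin.sum_univ_two, h₁₀, of_apply,
    cons_val', cons_val_zero, cons_val_one, cons_val_fin_one]
  ring

lemma circle_of_det_eq_trace_goldenForm_sq {G : Matrix (Fin 2) (Fin 2) ℝ} (hG : G.PosDef)
    (htr : 0 ≤ trace (goldenForm * G)) (hdet : G.det = 3 * trace (goldenForm * G) ^ 2) :
    (G 0 1 / G 0 0 + 1 / 2) ^ 2 + (√(G 1 1 / G 0 0 - (G 0 1 / G 0 0) ^ 2) - 1 / (2 * √3)) ^ 2
      = (2 / √3) ^ 2 := by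
  have hsymm : G.IsSymm := by simpa using hG.isHermitian
  rw [trace_goldenForm_mul hsymm] at htr hdet
  rw [det_fin_two, hsymm.apply 0 1, ← sq] at hdet
  exact circle_of_det_eq hG.diag_pos htr hdet

lemma posDef_gram_unit : (!![6, -3; -3, 14] : Matrix (Fin 2) (Fin 2) ℝ).PosDef := by
  refine PosDef.of_dotProduct_mulVec_pos ?_ fun v hv => ?_
  · ext i j
    fin_cases i <;> fin_cases j <;> simp
  · have hv' : v 0 ≠ 0 ∨ v 1 ≠ 0 := by
      by_contra! h
      exact hv (funext fun i => by fin_cases i <;> simp [h])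
    simp only [dotProduct, mulVec, Fin.sum_univ_two, Pi.star_apply, star_trivial, of_apply,
      cons_val', cons_val_zero, cons_val_one, cons_val_fin_one]
    rcases hv' with h | h
    · nlinarith [sq_pos_of_ne_zero h, sq_nonneg (v 0 - 2 * v 1), sq_nonneg (v 1)]
    · nlinarith [sq_pos_of_ne_zero h, sq_nonneg (2 * v 0 - v 1), sq_nonneg (v 0)]

/-- Let `η₁ ≠ η₂` be the roots of `x² + x − 1`, `P = [[1,1],[η₁,η₂]]`,
`G_unit = [[6,−3],[−3,14]]`. For positive reals `a, b`, with
`M = P·diag(a,b)·P⁻¹` and `G' = M·G_unit·Mᵀ`, the upper-half-plane point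
`(x, y)` of `G'` lies on the circle `(x+1/2)² + (y−1/(2√3))² = (2/√3)²`. -/
theorem stmt13 (η₁ η₂ : ℝ) (h₁ : η₁ ^ 2 + η₁ - 1 = 0) (h₂ : η₂ ^ 2 + η₂ - 1 = 0)
    (hne : η₁ ≠ η₂) (a b : ℝ) (ha : 0 < a) (hb : 0 < b) :
    let P : Matrix (Fin 2) (Fin 2) ℝ := !![1, 1; η₁, η₂]
    let Gunit : Matrix (Fin 2) (Fin 2) ℝ := !![6, -3; -3, 14]
    let M : Matrix (Fin 2) (Fin 2) ℝ := P * Matrix.diagonal ![a, b] * P⁻¹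
    let G' : Matrix (Fin 2) (Fin 2) ℝ := M * Gunit * Mᵀ
    let x : ℝ := G' 0 1 / G' 0 0
    let y : ℝ := Real.sqrt (G' 1 1 / G' 0 0 - x ^ 2)
    (x + 1 / 2) ^ 2 + (y - 1 / (2 * Real.sqrt 3)) ^ 2 = (2 / Real.sqrt 3) ^ 2 := by
  intro P Gunit M G' x y
  have hab : 0 < a * b := mul_pos ha hb
  have hP : IsUnit P.det := by
    simpa [P, det_fin_two_of, sub_eq_zero] using hne.symm
  obtain ⟨hiso₀, hiso₁⟩ := goldenForm_isotropic h₁ h₂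
  have hM : Mᵀ * goldenForm * M = (a * b) • goldenForm :=
    transpose_mul_mul_eq_smul_of_isotropic_columns hP hiso₀ hiso₁ a b
  have hdetM : M.det = a * b := by
    simp [M, det_conj ((isUnit_iff_isUnit_det P).2 hP)]
  have hG' : G'.PosDef :=
    posDef_gram_unit.mul_mul_transpose_of_isUnit_det (by rw [hdetM]; exact hab.ne'.isUnit)
  have htr : trace (goldenForm * G') = 5 * (a * b) := by
    have htr_unit : trace (goldenForm * Gunit) = 5 := by
      norm_num [goldenForm, Gunit, trace_fin_two]
    rw [trace_mul_conj_eq_mul_trace hM, htr_unit, mul_comm]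
  have hdet : G'.det = 75 * (a * b) ^ 2 := by
    simp only [G', det_mul, det_transpose, hdetM, Gunit, det_fin_two_of]
    ring
  exact circle_of_det_eq_trace_goldenForm_sq hG' (by rw [htr]; positivity)
    (by rw [hdet, htr]; ring)
end

section
/- The determinant of the r×r matrix G with G₀₀ = (p−1)/2, G₀ⱼ = Gⱼ₀ = −1 for j ≥ 1, Gⱼⱼ = p−2 for j ≥ 1, and Gᵢⱼ = −2 for distinct i, j ≥ 1, where r = (p−1)/2 and p ≥ 5 is prime, equals p^{(p−3)/2}, the discriminant of Q(ζ_p + ζ_p⁻¹). -/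
/-!
Since `p = 2r + 1`, column `0` of `G` sums to `1` and every other column to `2`. Replacing row `0`
by the sum of all rows therefore keeps the determinant and makes that row `(1, 2, …, 2)`. Adding
it to every other row turns row `i ≥ 1` into `p • eᵢ`, and subtracting twice column `0` from the
other columns leaves `diag (1, p, …, p)`, of determinant `p ^ (r - 1)`.
-/

open Matrix Finset

namespace RealCyclotomic

variable {R ι : Type*} [CommRing R] [Fintype ι] [DecidableEq ι]

/-- With `p = 2 * card ι + 1`, the Gram matrix of the trace form of `ℤ[ζ_p + ζ_p⁻¹]` in the
basis `1, ζ_p ^ j + ζ_p ^ (-j)`, the index `k` standing for the basis vector `1`. -/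
def traceGram (k : ι) : Matrix ι ι R :=
  Matrix.of fun i j =>
    if i = k ∧ j = k then (Fintype.card ι : R)
    else if i = k ∨ j = k then -1
    else if i = j then 2 * Fintype.card ι - 1
    else -2

def traceGramReduced (k : ι) : Matrix ι ι R :=
  Matrix.of fun i j =>
    if i = k then (if j = k then 1 else 2)
    else if i = j then 2 * Fintype.card ι + 1
    else 0

theorem sum_traceGram_apply (k j : ι) :
    ∑ i, traceGram (R := R) k i j = if j = k then 1 else 2 := by
  by_cases hjk : j = k
  · subst hjk
    have hcol : ∀ i, traceGram (R := R) j i j =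
        (if i = j then (Fintype.card ι : R) + 1 else 0) - 1 := by
      intro i
      by_cases hij : i = j <;> simp [traceGram, hij]
    simp only [hcol, sum_sub_distrib, sum_ite_eq', mem_univ, if_true, sum_const, card_univ,
      nsmul_eq_mul, mul_one]
    ring
  · have hcol : ∀ i, traceGram (R := R) k i j =
        (if i = k then 1 else 0) + (if i = j then 2 * (Fintype.card ι : R) + 1 else 0) - 2 := by
      intro i
      by_cases hik : i = k
      · subst hik
        simp [traceGram, hjk, Ne.symm hjk]
        norm_num
      · by_cases hij : i = j <;> simp [traceGram, hik, hjk, hij]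
        ring
    simp only [hcol, sum_sub_distrib, sum_add_distrib, sum_ite_eq', mem_univ, if_true, sum_const,
      card_univ, nsmul_eq_mul, hjk, if_false]
    ring

theorem det_traceGram_eq_det_traceGramReduced (k : ι) :
    (traceGram (R := R) k).det = (traceGramReduced k).det := by
  let A : Matrix ι ι R := traceGram k
  let colSum : ι → R := fun j => if j = k then 1 else 2
  have hcolSum : ∑ i, A i = colSum := funext fun j =>
    (Finset.sum_apply j univ A).trans (sum_traceGram_apply k j)
  have hrow : (A.updateRow k colSum).det = A.det := by
    simpa [hcolSum] using det_updateRow_sum A k 1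
  rw [← hrow]
  refine (det_eq_of_forall_row_eq_smul_add_const (fun i => if i = k then 0 else 1) k
    (by simp) fun i j => ?_).symm
  by_cases hik : i = k
  · subst hik
    simp [colSum, traceGramReduced]
  · rw [updateRow_self, updateRow_ne hik, if_neg hik, one_mul]
    by_cases hjk : j = k
    · subst hjk
      simp [A, colSum, traceGramReduced, traceGram, hik]
    · by_cases hij : i = j <;> simp [A, colSum, traceGramReduced, traceGram, hik, hjk, hij]
      ring

theorem det_traceGramReduced (k : ι) :
    (traceGramReduced (R := R) k).det = (2 * Fintype.card ι + 1) ^ (Fintype.card ι - 1) := by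
  let d : ι → R := Function.update (fun _ => 2 * Fintype.card ι + 1) k 1
  have hdiag : (traceGramReduced (R := R) k)ᵀ.det = (diagonal d).det := by
    refine det_eq_of_forall_row_eq_smul_add_const (fun i => if i = k then 0 else 2) k
      (by simp) fun i j => ?_
    by_cases hik : i = k <;> by_cases hjk : j = k <;> by_cases hij : i = j <;>
      simp_all [traceGramReduced, d, eq_comm]
  rw [← det_transpose, hdiag, det_diagonal, prod_update_of_mem (mem_univ k), prod_const,
    card_sdiff, card_univ]
  simp

theorem det_traceGram (k : ι) :
    (traceGram (R := R) k).det = (2 * Fintype.card ι + 1) ^ (Fintype.card ι - 1) := by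
  rw [det_traceGram_eq_det_traceGramReduced, det_traceGramReduced]

end RealCyclotomic

/-- For a prime `p ≥ 5` and `r = (p−1)/2`, the determinant of the `r×r`
matrix `G` with `G₀₀ = (p−1)/2`, `G₀ⱼ = Gⱼ₀ = −1`, `Gⱼⱼ = p−2` (`j ≥ 1`) and
`Gᵢⱼ = −2` for distinct `i, j ≥ 1` equals `p^{(p−3)/2}`, the discriminant of
`ℚ(ζ_p + ζ_p⁻¹)`. -/
theorem stmt14 (p r : ℕ) (hp : p.Prime) (hp5 : 5 ≤ p) (hr : r = (p - 1) / 2)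
    (G : Matrix (Fin r) (Fin r) ℤ)
    (hG : ∀ i j : Fin r,
      G i j = if (i : ℕ) = 0 ∧ (j : ℕ) = 0 then ((p : ℤ) - 1) / 2
        else if (i : ℕ) = 0 ∨ (j : ℕ) = 0 then -1
        else if i = j then (p : ℤ) - 2
        else -2) :
    G.det = (p : ℤ) ^ ((p - 3) / 2) := by
  have hp_odd : p % 2 = 1 := Nat.odd_iff.mp (hp.odd_of_ne_two (by omega))
  have hr_pos : 0 < r := by omega
  have hG_eq : G = RealCyclotomic.traceGram ⟨0, hr_pos⟩ := by
    ext i j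
    have hcorner : ((p : ℤ) - 1) / 2 = r := by omega
    have hdiag : (p : ℤ) - 2 = 2 * r - 1 := by omega
    simp [hG, RealCyclotomic.traceGram, Fin.ext_iff, hcorner, hdiag]
  rw [hG_eq, RealCyclotomic.det_traceGram, Fintype.card_fin]
  congr 1 <;> omega
end
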